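/- For every w ∈ W and every λ ∈ V_ℂ such that α̂(λ) ≠ 0 and ρ(α̂(λ)) ≠ 0 for every coroot α̂ ∈ R̂, the following identity holds: c(−wλ) · r(λ)/r(wλ) = ∏_{α̂ ∈ R̂(w)} (α̂(λ) + 1)/α̂(λ) · ∏_{β̂ ∈ R̂_+ ∖ R̂(w)} (β̂(λ) − 1)/β̂(λ) · ∏_{γ̂ ∈ R̂(w)} ρ(γ̂(λ))/ρ(γ̂(λ) + 1). -/

import Mathlib

open scoped RealInnerProductSpace Classical

/-- A reduced crystallographic root system in `V = EuclideanSpace ℝ (Fin n)`, with a fixed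
positive system.  `W` acts on `V`, hence on coroots, and is extended complex-linearly to
the complexification `V_ℂ = Fin n → ℂ`. -/
structure RootData (n : ℕ) where
  roots : Finset (EuclideanSpace ℝ (Fin n))
  pos : Finset (EuclideanSpace ℝ (Fin n))
  pos_subset : pos ⊆ roots
  ne_zero : ∀ a ∈ roots, a ≠ 0
  union_eq : roots = pos ∪ pos.image (fun a => -a)
  pos_neg_disj : ∀ a ∈ pos, -a ∉ pos
  reduced : ∀ a ∈ roots, ∀ t : ℝ, t • a ∈ roots → t = 1 ∨ t = -1
  crystallographic : ∀ a ∈ roots, ∀ b ∈ roots, ∃ k : ℤ, 2 * ⟪a, b⟫ / ⟪a, a⟫ = (k : ℝ)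
  refl_mem : ∀ a ∈ roots, ∀ b ∈ roots, b - (2 * ⟪a, b⟫ / ⟪a, a⟫) • a ∈ roots

namespace RootData

variable {n : ℕ}

/-- The Weyl group `W`, generated by the orthogonal reflections in the roots. -/
noncomputable def weyl (S : RootData n) :
    Subgroup (EuclideanSpace ℝ (Fin n) ≃ₗ[ℝ] EuclideanSpace ℝ (Fin n)) :=
  Subgroup.closure {g | ∃ a ∈ S.roots, ∀ v, g v = v - (2 * ⟪a, v⟫ / ⟪a, a⟫) • a}

/-- The coroot `α̂ := 2α/(α,α)` of a root `α`. -/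
noncomputable def co (a : EuclideanSpace ℝ (Fin n)) : EuclideanSpace ℝ (Fin n) :=
  (2 / ⟪a, a⟫) • a

/-- Evaluation of a coroot (as a linear functional via the inner product), extended
`ℂ`-linearly to the complexification `V_ℂ = Fin n → ℂ`. -/
noncomputable def ev (a : EuclideanSpace ℝ (Fin n)) (l : Fin n → ℂ) : ℂ :=
  ∑ i, (a i : ℂ) * l i

/-- The `ℂ`-linear extension of `w : V ≃ₗ[ℝ] V` to the complexification `V_ℂ`. -/
noncomputable def cpx (w : EuclideanSpace ℝ (Fin n) ≃ₗ[ℝ] EuclideanSpace ℝ (Fin n))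
    (l : Fin n → ℂ) : Fin n → ℂ :=
  fun i => ∑ j, ((w (EuclideanSpace.single j 1)) i : ℂ) * l j

/-- The inversion set `R̂(w) = {α̂ ∈ R̂₊ : w(α̂) ∈ R̂₋}` (indexed by the positive roots
`α` with `w(α)` negative, which correspond bijectively to the coroots in question). -/
noncomputable def invSet (S : RootData n)
    (w : EuclideanSpace ℝ (Fin n) ≃ₗ[ℝ] EuclideanSpace ℝ (Fin n)) :
    Finset (EuclideanSpace ℝ (Fin n)) :=
  S.pos.filter fun a => w a ∈ S.pos.image (fun b => -b)

/-- `c(λ) := ∏_{α ∈ R₊} (α̂(λ) + 1)/α̂(λ)`. -/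
noncomputable def cfun (S : RootData n) (l : Fin n → ℂ) : ℂ :=
  ∏ a ∈ S.pos, (ev (co a) l + 1) / ev (co a) l

/-- `r(λ) := ∏_{α ∈ R₊} ρ(α̂(λ))`. -/
noncomputable def rfun (S : RootData n) (ρ : ℂ → ℂ) (l : Fin n → ℂ) : ℂ :=
  ∏ a ∈ S.pos, ρ (ev (co a) l)

end RootData

open RootData

/-!
Elements of `W` are isometries permuting the roots, so `(wα)^(wλ) = α̂(λ)`, and `α ↦ ±wα`
(the sign making it positive) is a permutation of `R₊` that picks the sign `-` exactly on the
inversion set `R̂(w)`. Reindexing `c(-wλ)` and `r(wλ)` along this permutation, the factor of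
`c(-wλ)` at `α` is `(α̂(λ)+1)/α̂(λ)` on `R̂(w)` and `(α̂(λ)-1)/α̂(λ)` off it, while
`ρ(-s) = ρ(1+s)` turns `r(wλ)` into `∏_{R̂(w)} ρ(α̂(λ)+1) · ∏_{R₊∖R̂(w)} ρ(α̂(λ))`; the
factors of `r(λ)` off `R̂(w)` then cancel.
-/

theorem inner_sub_reflect_sub_reflect {E : Type*} [NormedAddCommGroup E] [InnerProductSpace ℝ E]
    (a u v : E) :
    ⟪u - (2 * ⟪a, u⟫ / ⟪a, a⟫) • a, v - (2 * ⟪a, v⟫ / ⟪a, a⟫) • a⟫ = ⟪u, v⟫ := by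
  rcases eq_or_ne a 0 with rfl | ha
  · simp
  have haa : ⟪a, a⟫ ≠ 0 := inner_self_ne_zero.mpr ha
  simp only [inner_sub_left, inner_sub_right, real_inner_smul_left, real_inner_smul_right,
    real_inner_comm u a]
  field_simp
  ring

theorem Set.MapsTo.symm_of_finite {α : Type*} {s : Set α} (hs : s.Finite) (e : α ≃ α)
    (h : Set.MapsTo e s s) : Set.MapsTo e.symm s s := by
  intro b hb
  obtain ⟨a, ha, rfl⟩ := ((hs.injOn_iff_bijOn_of_mapsTo h).mp e.injective.injOn).surjOn hb
  simpa using ha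

namespace RootData

variable {n : ℕ}

section Evaluation

variable (a : EuclideanSpace ℝ (Fin n)) (l : Fin n → ℂ)

theorem ev_neg_left : ev (-a) l = -ev a l := by
  simp [ev]

theorem ev_neg_right : ev a (-l) = -ev a l := by
  simp [ev]

theorem co_neg : co (-a) = -co a := by
  simp [co]

end Evaluation

section Isometry

variable {w : EuclideanSpace ℝ (Fin n) ≃ₗ[ℝ] EuclideanSpace ℝ (Fin n)}
  (hw : ∀ u v, ⟪w u, w v⟫ = ⟪u, v⟫) (a : EuclideanSpace ℝ (Fin n)) (l : Fin n → ℂ)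
include hw

theorem co_map : co (w a) = w (co a) := by
  rw [co, co, hw, map_smul]

theorem ev_map_cpx : ev (w a) (cpx w l) = ev a l := by
  have hcoord : ∀ j, ∑ i, ((w a) i : ℂ) * ((w (EuclideanSpace.single j 1)) i : ℂ) = a j := by
    intro j
    have h := hw a (EuclideanSpace.single j 1)
    rw [EuclideanSpace.inner_single_right, PiLp.inner_apply] at h
    simp only [RCLike.inner_apply, conj_trivial, one_mul] at h
    exact_mod_cast (Finset.sum_congr rfl fun i _ => mul_comm _ _).trans h
  simp only [ev, cpx, Finset.mul_sum]
  rw [Finset.sum_comm]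
  refine Finset.sum_congr rfl fun j _ => ?_
  rw [← hcoord j, Finset.sum_mul]
  exact Finset.sum_congr rfl fun i _ => by ring

end Isometry

section Weyl

variable (S : RootData n) {w : EuclideanSpace ℝ (Fin n) ≃ₗ[ℝ] EuclideanSpace ℝ (Fin n)}

theorem inner_map_map_of_mem_weyl (hw : w ∈ S.weyl) (u v : EuclideanSpace ℝ (Fin n)) :
    ⟪w u, w v⟫ = ⟪u, v⟫ := by
  induction hw using Subgroup.closure_induction generalizing u v with
  | mem g hg =>
    obtain ⟨a, -, hga⟩ := hg
    rw [hga, hga, inner_sub_reflect_sub_reflect]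
  | one => rfl
  | mul g h _ _ hg hh => exact (hg (h u) (h v)).trans (hh u v)
  | inv g _ hg => exact (hg (g.symm u) (g.symm v)).symm.trans (by simp)

theorem mapsTo_roots_of_mem_weyl (hw : w ∈ S.weyl) :
    Set.MapsTo w S.roots S.roots := by
  induction hw using Subgroup.closure_induction with
  | mem g hg =>
    obtain ⟨a, ha, hga⟩ := hg
    intro b hb
    rw [hga]
    exact S.refl_mem a ha b hb
  | one => exact Set.mapsTo_id _
  | mul g h _ _ hg hh => exact hg.comp hh
  | inv g _ hg => exact hg.symm_of_finite S.roots.finite_toSet g.toEquiv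

end Weyl

section Reindexing

variable (S : RootData n) {w : EuclideanSpace ℝ (Fin n) ≃ₗ[ℝ] EuclideanSpace ℝ (Fin n)}

noncomputable def toPos (x : EuclideanSpace ℝ (Fin n)) : EuclideanSpace ℝ (Fin n) :=
  if x ∈ S.pos.image (fun b => -b) then -x else x

theorem toPos_of_mem {x : EuclideanSpace ℝ (Fin n)} (hx : x ∈ S.pos.image (fun b => -b)) :
    S.toPos x = -x :=
  if_pos hx

theorem toPos_of_notMem {x : EuclideanSpace ℝ (Fin n)} (hx : x ∉ S.pos.image (fun b => -b)) :
    S.toPos x = x :=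
  if_neg hx

theorem toPos_mem_pos {x : EuclideanSpace ℝ (Fin n)} (hx : x ∈ S.roots) :
    S.toPos x ∈ S.pos := by
  unfold toPos
  split_ifs with hneg
  · obtain ⟨b, hb, rfl⟩ := Finset.mem_image.mp hneg
    rwa [neg_neg]
  · rw [S.union_eq, Finset.mem_union] at hx
    exact hx.resolve_right hneg

theorem toPos_symm_toPos_map (g : EuclideanSpace ℝ (Fin n) ≃ₗ[ℝ] EuclideanSpace ℝ (Fin n))
    {a : EuclideanSpace ℝ (Fin n)} (ha : a ∈ S.pos) : S.toPos (g.symm (S.toPos (g a))) = a := by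
  have hneg : -a ∈ S.pos.image (fun b => -b) := Finset.mem_image_of_mem _ ha
  have hpos : a ∉ S.pos.image (fun b => -b) := fun h => by
    obtain ⟨b, hb, rfl⟩ := Finset.mem_image.mp h
    exact S.pos_neg_disj b hb ha
  by_cases hga : g a ∈ S.pos.image (fun b => -b)
  · rw [S.toPos_of_mem hga, map_neg, g.symm_apply_apply, S.toPos_of_mem hneg, neg_neg]
  · rw [S.toPos_of_notMem hga, g.symm_apply_apply, S.toPos_of_notMem hpos]

theorem prod_pos_comp_toPos_map {M : Type*} [CommMonoid M] (hw : w ∈ S.weyl)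
    (f : EuclideanSpace ℝ (Fin n) → M) :
    ∏ a ∈ S.pos, f (S.toPos (w a)) = ∏ b ∈ S.pos, f b := by
  have hw' : w.symm ∈ S.weyl := inv_mem hw
  refine Finset.prod_nbij' (fun a => S.toPos (w a)) (fun b => S.toPos (w.symm b))
    (fun a ha => S.toPos_mem_pos (S.mapsTo_roots_of_mem_weyl hw (S.pos_subset ha)))
    (fun b hb => S.toPos_mem_pos (S.mapsTo_roots_of_mem_weyl hw' (S.pos_subset hb)))
    (fun a ha => S.toPos_symm_toPos_map w ha) (fun b hb => ?_) (fun a _ => rfl)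
  simpa using S.toPos_symm_toPos_map w.symm hb

theorem ev_co_toPos_map_cpx (hw : ∀ u v, ⟪w u, w v⟫ = ⟪u, v⟫) (a : EuclideanSpace ℝ (Fin n))
    (l : Fin n → ℂ) :
    ev (co (S.toPos (w a))) (cpx w l) =
      if w a ∈ S.pos.image (fun b => -b) then -ev (co a) l else ev (co a) l := by
  split_ifs with hwa
  · rw [S.toPos_of_mem hwa, co_neg, ev_neg_left, co_map hw, ev_map_cpx hw]
  · rw [S.toPos_of_notMem hwa, co_map hw, ev_map_cpx hw]

theorem prod_pos_ev_co_cpx (hw : w ∈ S.weyl) (F : ℂ → ℂ) (l : Fin n → ℂ) :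
    ∏ b ∈ S.pos, F (ev (co b) (cpx w l)) =
      (∏ a ∈ invSet S w, F (-ev (co a) l)) * ∏ a ∈ S.pos \ invSet S w, F (ev (co a) l) := by
  rw [← S.prod_pos_comp_toPos_map hw, invSet, ← Finset.filter_not, ← Finset.prod_ite]
  refine Finset.prod_congr rfl fun a _ => ?_
  rw [S.ev_co_toPos_map_cpx (S.inner_map_map_of_mem_weyl hw), apply_ite F]

theorem cfun_neg_cpx (hw : w ∈ S.weyl) (l : Fin n → ℂ) :
    cfun S (-(cpx w l)) =
      (∏ a ∈ invSet S w, (ev (co a) l + 1) / ev (co a) l) *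
        ∏ a ∈ S.pos \ invSet S w, (ev (co a) l - 1) / ev (co a) l := by
  simp only [cfun, ev_neg_right]
  rw [S.prod_pos_ev_co_cpx hw (fun y => (-y + 1) / -y)]
  congr 1
  · simp only [neg_neg]
  · refine Finset.prod_congr rfl fun a _ => ?_
    rw [neg_add_eq_sub, ← neg_sub, neg_div_neg_eq]

theorem rfun_cpx {ρ : ℂ → ℂ} (hρ : ∀ s, ρ s = ρ (1 - s)) (hw : w ∈ S.weyl) (l : Fin n → ℂ) :
    rfun S ρ (cpx w l) =
      (∏ a ∈ invSet S w, ρ (ev (co a) l + 1)) * ∏ a ∈ S.pos \ invSet S w, ρ (ev (co a) l) := by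
  rw [rfun, S.prod_pos_ev_co_cpx hw ρ]
  congr 1
  refine Finset.prod_congr rfl fun a _ => ?_
  rw [hρ, sub_neg_eq_add, add_comm]

end Reindexing

end RootData

theorem statement8_general (n : ℕ) (S : RootData n) (ρ : ℂ → ℂ) (hρ : ∀ s : ℂ, ρ s = ρ (1 - s))
    (w : EuclideanSpace ℝ (Fin n) ≃ₗ[ℝ] EuclideanSpace ℝ (Fin n)) (hw : w ∈ S.weyl)
    (l : Fin n → ℂ)
    (hρ0 : ∀ a ∈ S.roots, ρ (ev (co a) l) ≠ 0) :
    cfun S (-(cpx w l)) * (rfun S ρ l / rfun S ρ (cpx w l)) =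
      (∏ a ∈ invSet S w, (ev (co a) l + 1) / ev (co a) l) *
      (∏ a ∈ S.pos \ invSet S w, (ev (co a) l - 1) / ev (co a) l) *
      (∏ a ∈ invSet S w, ρ (ev (co a) l) / ρ (ev (co a) l + 1)) := by
  have hsplit : rfun S ρ l =
      (∏ a ∈ invSet S w, ρ (ev (co a) l)) * ∏ a ∈ S.pos \ invSet S w, ρ (ev (co a) l) := by
    rw [rfun, mul_comm]
    exact (Finset.prod_sdiff (Finset.filter_subset _ _)).symm
  have hne : ∏ a ∈ S.pos \ invSet S w, ρ (ev (co a) l) ≠ 0 :=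
    Finset.prod_ne_zero_iff.mpr fun a ha => hρ0 a (S.pos_subset (Finset.mem_sdiff.mp ha).1)
  rw [S.cfun_neg_cpx hw, S.rfun_cpx hρ hw, hsplit, mul_div_mul_right _ _ hne,
    ← Finset.prod_div_distrib]

/-- for every `w ∈ W` and every `λ ∈ V_ℂ` such that `α̂(λ) ≠ 0` and
`ρ(α̂(λ)) ≠ 0` for every coroot `α̂ ∈ R̂`, one has
`c(−wλ)·r(λ)/r(wλ) = ∏_{α̂ ∈ R̂(w)} (α̂(λ)+1)/α̂(λ) · ∏_{β̂ ∈ R̂₊∖R̂(w)} (β̂(λ)−1)/β̂(λ)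
  · ∏_{γ̂ ∈ R̂(w)} ρ(γ̂(λ))/ρ(γ̂(λ)+1)`. -/
theorem statement8 (n : ℕ) (S : RootData n) (ρ : ℂ → ℂ) (hρ : ∀ s : ℂ, ρ s = ρ (1 - s))
    (w : EuclideanSpace ℝ (Fin n) ≃ₗ[ℝ] EuclideanSpace ℝ (Fin n)) (hw : w ∈ S.weyl)
    (l : Fin n → ℂ)
    (h0 : ∀ a ∈ S.roots, ev (co a) l ≠ 0)
    (hρ0 : ∀ a ∈ S.roots, ρ (ev (co a) l) ≠ 0) :
    cfun S (-(cpx w l)) * (rfun S ρ l / rfun S ρ (cpx w l)) =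
      (∏ a ∈ invSet S w, (ev (co a) l + 1) / ev (co a) l) *
      (∏ a ∈ S.pos \ invSet S w, (ev (co a) l - 1) / ev (co a) l) *
      (∏ a ∈ invSet S w, ρ (ev (co a) l) / ρ (ev (co a) l + 1)) :=
  statement8_general n S ρ hρ w hw l hρ0
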